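/- Fix k ∈ ℕ and a bounded continuous function f: ℝ^k → ℝ. Then the map G_f: PSD → ℝ defined by G_f(L) = ∫_{ℝ^k} f dμ_{0,L} is continuous with respect to the metric on PSD induced by the operator norm. -/

import Mathlib

open MeasureTheory ProbabilityTheory Filter

noncomputable section

/-- Projection of `ℝ^n` onto the first `k` coordinates (junk `0` beyond `n`). -/
def projk (k n : ℕ) (x : EuclideanSpace ℝ (Fin n)) : EuclideanSpace ℝ (Fin k) :=
  (EuclideanSpace.equiv (Fin k) ℝ).symm fun i => if h : (i : ℕ) < n then x ⟨i, h⟩ else 0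

/-- Extension of a vector of `ℝ^k` to `ℝ^n` by appending zeros. -/
def extendk {k : ℕ} (n : ℕ) (v : EuclideanSpace ℝ (Fin k)) : EuclideanSpace ℝ (Fin n) :=
  (EuclideanSpace.equiv (Fin n) ℝ).symm fun i => if h : (i : ℕ) < k then v ⟨i, h⟩ else 0

/-- The matrix of the orthogonal projection of `ℝ^k` onto the span of `v` (zero if `v = 0`). -/
def projMatrix {k : ℕ} (v : EuclideanSpace ℝ (Fin k)) : Matrix (Fin k) (Fin k) ℝ :=
  (‖v‖ ^ 2)⁻¹ • Matrix.vecMulVec (fun i => v i) (fun i => v i)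

/-- The Gaussian measure on `ℝ^k` with mean `ρ` and positive-semidefinite covariance matrix `L`,
realized as the pushforward of the standard Gaussian under `x ↦ ρ + √L x`
(zero junk measure if `L` is not positive semidefinite). -/
def gaussianOf {k : ℕ} (ρ : EuclideanSpace ℝ (Fin k)) (L : Matrix (Fin k) (Fin k) ℝ) :
    Measure (EuclideanSpace ℝ (Fin k)) :=
  open Classical in
  if hL : L.PosSemidef then
    Measure.map (fun x : Fin k → ℝ =>
        ρ + (EuclideanSpace.equiv (Fin k) ℝ).symm ((hL.1.eigenvectorUnitary.1 *
          Matrix.diagonal ((RCLike.ofReal : ℝ → ℝ) ∘ Real.sqrt ∘ hL.1.eigenvalues) *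
          (star hL.1.eigenvectorUnitary : Matrix (Fin k) (Fin k) ℝ)).mulVec x))
      (Measure.pi fun _ : Fin k => gaussianReal 0 1)
  else 0

/-- The uniform probability measure on a set `S ⊆ ℝ^n`, namely the `d`-dimensional Hausdorff
measure restricted to `S` and normalized to total mass 1. -/
def unifProb {n : ℕ} (d : ℝ) (S : Set (EuclideanSpace ℝ (Fin n))) :
    Measure (EuclideanSpace ℝ (Fin n)) :=
  (μH[d] S)⁻¹ • (μH[d]).restrict S

/-- The great-circle slice `S_{n,u⁽¹⁾,…,u⁽ᵞ⁾}`: the sphere `S^{n-1}(√n)` intersected with the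
orthogonal complements of the truncations/extensions `(u⁽ⁱ⁾)_(n)` of vectors `u⁽ⁱ⁾ ∈ ℝ^m`. -/
def Sslice {m γ : ℕ} (u : Fin γ → EuclideanSpace ℝ (Fin m)) (n : ℕ) :
    Set (EuclideanSpace ℝ (Fin n)) :=
  Metric.sphere 0 (Real.sqrt n) ∩
    {x | ∀ i, (inner ℝ x ((EuclideanSpace.equiv (Fin n) ℝ).symm
      fun j => if h : (j : ℕ) < m then u i ⟨j, h⟩ else 0) : ℝ) = 0}

end

/-!
`μ_{0,L}` is the image of the standard Gaussian `γ` under `x ↦ √L x`, so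
`G_f(L) = H(√L)` with `H(M) = ∫ f(M x) dγ(x)`. Since `f` is bounded and `γ` is finite, `H` is
continuous by dominated convergence, and `L ↦ √L` is continuous on PSD because the continuous
functional calculus of self-adjoint matrices is continuous in the matrix.
-/

open Matrix WithLp
open scoped Matrix.Norms.L2Operator

theorem Matrix.continuousOn_cfc_of_continuous {n : Type*} [Fintype n] [DecidableEq n]
    {f : ℝ → ℝ} (hf : Continuous f) :
    ContinuousOn (cfc f : Matrix n n ℝ → Matrix n n ℝ) {A | IsSelfAdjoint A} :=
  ContinuousOn.cfc_of_mem_nhdsSet (p := IsSelfAdjoint) f (s := Set.univ)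
    (t := {A | IsSelfAdjoint A}) univ_mem continuousOn_id (fun _ h => h) hf.continuousOn

theorem continuous_integral_comp_mulVec {m n E : Type*} [Fintype m] [Fintype n]
    [NormedAddCommGroup E] [NormedSpace ℝ E] {μ : Measure (n → ℝ)} [IsFiniteMeasure μ]
    {f : EuclideanSpace ℝ m → E} (hf : Continuous f) {C : ℝ} (hC : ∀ y, ‖f y‖ ≤ C) :
    Continuous fun M : Matrix m n ℝ => ∫ x, f (toLp 2 (M *ᵥ x)) ∂μ := by
  have : FirstCountableTopology (Matrix m n ℝ) :=
    inferInstanceAs (FirstCountableTopology (m → n → ℝ))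
  have hcont : Continuous fun p : Matrix m n ℝ × (n → ℝ) => f (toLp 2 (p.1 *ᵥ p.2)) :=
    hf.comp ((PiLp.continuous_toLp 2 _).comp (continuous_fst.matrix_mulVec continuous_snd))
  exact continuous_of_dominated
    (fun M => (hcont.comp (Continuous.prodMk_right M)).aestronglyMeasurable)
    (fun M => ae_of_all _ fun x => hC _) (integrable_const C)
    (ae_of_all _ fun x => hcont.comp (Continuous.prodMk_left x))

theorem gaussianOf_eq_map_cfc_sqrt {k : ℕ} (ρ : EuclideanSpace ℝ (Fin k))
    {L : Matrix (Fin k) (Fin k) ℝ} (hL : L.PosSemidef) :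
    gaussianOf ρ L = (Measure.pi fun _ : Fin k => gaussianReal 0 1).map
      fun x => ρ + toLp 2 (cfc Real.sqrt L *ᵥ x) := by
  rw [gaussianOf, dif_pos hL, hL.1.cfc_eq]
  rfl

theorem integral_gaussianOf {k : ℕ} {E : Type*} [NormedAddCommGroup E] [NormedSpace ℝ E]
    (ρ : EuclideanSpace ℝ (Fin k)) {L : Matrix (Fin k) (Fin k) ℝ} (hL : L.PosSemidef)
    {f : EuclideanSpace ℝ (Fin k) → E} (hf : Continuous f) :
    ∫ y, f y ∂gaussianOf ρ L =
      ∫ x, f (ρ + toLp 2 (cfc Real.sqrt L *ᵥ x)) ∂Measure.pi fun _ => gaussianReal 0 1 := by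
  rw [gaussianOf_eq_map_cfc_sqrt ρ hL, integral_map _ hf.aestronglyMeasurable]
  fun_prop

theorem continuousOn_integral_gaussianOf {k : ℕ} {E : Type*} [NormedAddCommGroup E]
    [NormedSpace ℝ E] (ρ : EuclideanSpace ℝ (Fin k)) {f : EuclideanSpace ℝ (Fin k) → E}
    (hf : Continuous f) {C : ℝ} (hC : ∀ y, ‖f y‖ ≤ C) :
    ContinuousOn (fun L => ∫ y, f y ∂gaussianOf ρ L) {L | L.PosSemidef} := by
  have hH : Continuous fun M : Matrix (Fin k) (Fin k) ℝ =>
      ∫ x, f (ρ + toLp 2 (M *ᵥ x)) ∂Measure.pi fun _ => gaussianReal 0 1 :=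
    continuous_integral_comp_mulVec (by fun_prop) fun _ => hC _
  have hsqrt : ContinuousOn (cfc Real.sqrt) {L : Matrix (Fin k) (Fin k) ℝ | L.PosSemidef} :=
    (continuousOn_cfc_of_continuous Real.continuous_sqrt).mono fun _ hL => hL.isHermitian
  exact (hH.comp_continuousOn hsqrt).congr fun L hL => integral_gaussianOf ρ hL hf

/-- **Continuity of the Gaussian expectation in the covariance.**
For a bounded continuous `f : ℝ^k → ℝ`, the map `G_f` sending a positive-semidefinite `k × k`
matrix `L` to `∫ f dμ_{0,L}` (the Gaussian measure with mean `0` and covariance `L`) is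
continuous on PSD with respect to the metric induced by the operator norm. -/
theorem stmt6 {k : ℕ} (f : EuclideanSpace ℝ (Fin k) → ℝ)
    (hfc : Continuous f) (hfb : ∃ C, ∀ x, |f x| ≤ C) :
    ∀ L : Matrix (Fin k) (Fin k) ℝ, L.PosSemidef →
      ∀ ε : ℝ, 0 < ε → ∃ δ : ℝ, 0 < δ ∧
        ∀ L' : Matrix (Fin k) (Fin k) ℝ, L'.PosSemidef →
          ‖(Matrix.toEuclideanCLM (𝕜 := ℝ) L' : EuclideanSpace ℝ (Fin k) →L[ℝ] EuclideanSpace ℝ (Fin k))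
            - Matrix.toEuclideanCLM (𝕜 := ℝ) L‖ < δ →
          |(∫ x, f x ∂ (gaussianOf (0 : EuclideanSpace ℝ (Fin k)) L'))
            - ∫ x, f x ∂ (gaussianOf (0 : EuclideanSpace ℝ (Fin k)) L)| < ε := by
  obtain ⟨C, hC⟩ := hfb
  intro L hL ε hε
  obtain ⟨δ, hδ, hclose⟩ := Metric.continuousWithinAt_iff.mp
    (continuousOn_integral_gaussianOf 0 hfc hC L hL) ε hε
  refine ⟨δ, hδ, fun L' hL' hLL' => ?_⟩
  rw [← map_sub, l2_opNorm_toEuclideanCLM] at hLL'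
  exact hclose hL' (by rwa [dist_eq_norm])
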